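/- Let A ∈ ℝ^{n×n}, G, H symmetric PSD, with (H, A) detectable. Let X̂ ≥ 0 be symmetric satisfying uᵀ[(Aᵀ − X̂G)X̂ + X̂(A − GX̂) + X̂GX̂ + H]u ≤ 0 for all u. If (A − GX̂)y = λy with y ≠ 0 and Re(λ) ≥ 0, then Hy = 0 and GX̂y = 0, hence Ay = λy; therefore by detectability no such y exists and A − GX̂ is stable. -/

import Mathlib

/-!
For an eigenpair `(λ, y)` of `F = A - G X̂` with `Re λ ≥ 0`, the quadratic form of the Riccati
inequality at `y` equals `2 Re λ · y* X̂ y + (X̂ y)* G (X̂ y) + y* H y`. All three terms are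
nonnegative and their sum is nonpositive, so each vanishes: `H y = 0` and `G X̂ y = 0`, whence
`A y = F y = λ y` and detectability forces `y = 0`. The real inequality reaches complex vectors
because a real positive semidefinite matrix stays positive semidefinite over `ℂ`.
-/

open Matrix
open scoped ComplexOrder

namespace Matrix

variable {m n : Type*}

theorem map_ofReal_conjTranspose (M : Matrix m n ℝ) :
    Mᴴ.map Complex.ofReal = (M.map Complex.ofReal)ᴴ :=
  conjTranspose_map _ fun x => (Complex.conj_ofReal x).symm

variable [Fintype n]

theorem map_ofReal_mul {l : Type*} (M : Matrix l n ℝ) (N : Matrix n m ℝ) :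
    (M * N).map Complex.ofReal = M.map Complex.ofReal * N.map Complex.ofReal :=
  Matrix.map_mul (f := Complex.ofRealHom)

theorem PosSemidef.map_ofReal {M : Matrix n n ℝ} (hM : M.PosSemidef) :
    (M.map Complex.ofReal).PosSemidef := by
  classical
  obtain ⟨B, rfl⟩ : ∃ B : Matrix n n ℝ, M = Bᴴ * B := by
    open scoped MatrixOrder in exact CStarAlgebra.nonneg_iff_eq_star_mul_self.mp hM.nonneg
  rw [map_ofReal_mul, map_ofReal_conjTranspose]
  exact posSemidef_conjTranspose_mul_self _

theorem exists_mulVec_eq_smul_of_mem_spectrum {K : Type*} [Field K] [DecidableEq n]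
    {A : Matrix n n K} {μ : K} (hμ : μ ∈ spectrum K A) : ∃ v ≠ 0, A *ᵥ v = μ • v := by
  rw [← spectrum_toLin', ← Module.End.hasEigenvalue_iff_mem_spectrum] at hμ
  obtain ⟨v, hv⟩ := hμ.exists_hasEigenvector
  exact ⟨v, hv.2, by simpa using hv.apply_eq_smul⟩

theorem isHermitian_riccati {R : Type*} [CommRing R] [StarRing R] {F X G H : Matrix n n R}
    (hX : X.IsHermitian) (hG : G.IsHermitian) (hH : H.IsHermitian) :
    (Fᴴ * X + X * F + X * G * X + H).IsHermitian := by
  simp only [IsHermitian, conjTranspose_add, conjTranspose_mul, conjTranspose_conjTranspose,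
    hX.eq, hG.eq, hH.eq, mul_assoc]
  abel

section RCLike

variable {𝕜 : Type*} [RCLike 𝕜]

theorem dotProduct_lyapunov_mulVec_of_mulVec_eq_smul {F X : Matrix n n 𝕜} {y : n → 𝕜}
    {lam : 𝕜} (hy : F *ᵥ y = lam • y) :
    star y ⬝ᵥ (Fᴴ * X + X * F) *ᵥ y = (star lam + lam) * (star y ⬝ᵥ X *ᵥ y) := by
  rw [add_mulVec, dotProduct_add, ← mulVec_mulVec, ← mulVec_mulVec, dotProduct_mulVec,
    ← star_mulVec, hy, star_smul, smul_dotProduct, mulVec_smul, dotProduct_smul]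
  simp only [smul_eq_mul, add_mul]

theorem mulVec_eq_zero_of_riccati_nonpos {F X G H : Matrix n n 𝕜}
    (hX : X.PosSemidef) (hG : G.PosSemidef) (hH : H.PosSemidef)
    (hric : (-(Fᴴ * X + X * F + X * G * X + H)).PosSemidef) {lam : 𝕜} {y : n → 𝕜}
    (hy : F *ᵥ y = lam • y) (hre : 0 ≤ RCLike.re lam) :
    H *ᵥ y = 0 ∧ G *ᵥ X *ᵥ y = 0 := by
  have hXGX : star y ⬝ᵥ (X * G * X) *ᵥ y = star (X *ᵥ y) ⬝ᵥ G *ᵥ X *ᵥ y := by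
    rw [← mulVec_mulVec, ← mulVec_mulVec, dotProduct_mulVec, star_mulVec, hX.1.eq]
  have hsum : (star lam + lam) * (star y ⬝ᵥ X *ᵥ y) + star (X *ᵥ y) ⬝ᵥ G *ᵥ X *ᵥ y
      + star y ⬝ᵥ H *ᵥ y ≤ 0 := by
    have := hric.dotProduct_mulVec_nonneg y
    rwa [neg_mulVec, dotProduct_neg, neg_nonneg, add_mulVec, dotProduct_add, add_mulVec,
      dotProduct_add, dotProduct_lyapunov_mulVec_of_mulVec_eq_smul hy, hXGX] at this
  have hlam : 0 ≤ star lam + lam := by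
    rw [add_comm, RCLike.star_def, RCLike.add_conj]
    exact mul_nonneg zero_le_two (RCLike.ofReal_nonneg.mpr hre)
  have hXy := mul_nonneg hlam (hX.dotProduct_mulVec_nonneg y)
  have hGXy := hG.dotProduct_mulVec_nonneg (X *ᵥ y)
  have hHy := hH.dotProduct_mulVec_nonneg y
  obtain ⟨⟨-, hG0⟩, hH0⟩ :=
    (add_eq_zero_iff_of_nonneg (add_nonneg hXy hGXy) hHy).mp
      (le_antisymm hsum (add_nonneg (add_nonneg hXy hGXy) hHy))
    |>.imp_left (add_eq_zero_iff_of_nonneg hXy hGXy).mp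
  exact ⟨(hH.dotProduct_mulVec_zero_iff y).mp hH0, (hG.dotProduct_mulVec_zero_iff _).mp hG0⟩

theorem mulVec_eq_smul_of_riccati_nonpos {A X G H : Matrix n n 𝕜}
    (hX : X.PosSemidef) (hG : G.PosSemidef) (hH : H.PosSemidef)
    (hric : (-((A - G * X)ᴴ * X + X * (A - G * X) + X * G * X + H)).PosSemidef)
    ⦃lam : 𝕜⦄ ⦃y : n → 𝕜⦄ (hy : (A - G * X) *ᵥ y = lam • y) (hre : 0 ≤ RCLike.re lam) :
    H *ᵥ y = 0 ∧ (G * X) *ᵥ y = 0 ∧ A *ᵥ y = lam • y := by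
  obtain ⟨hHy, hGXy⟩ := mulVec_eq_zero_of_riccati_nonpos hX hG hH hric hy hre
  rw [mulVec_mulVec] at hGXy
  refine ⟨hHy, hGXy, ?_⟩
  rwa [sub_mulVec, hGXy, sub_zero] at hy

end RCLike

end Matrix

/-- If `(H, A)` is detectable, `X̂ ≥ 0` and
`(Aᵀ − X̂G)X̂ + X̂(A − GX̂) + X̂GX̂ + H ≤ 0` (as a quadratic form), then every
eigenpair `(λ, y)` of `A − GX̂` with `Re λ ≥ 0` satisfies `Hy = 0`, `GX̂y = 0`,
and `Ay = λy`; consequently `A − GX̂` is stable. -/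
theorem stmt_12 {n : ℕ} (A G H Xh : Matrix (Fin n) (Fin n) ℝ)
    (hG : G.PosSemidef) (hH : H.PosSemidef) (hXh : Xh.PosSemidef)
    (hdet : ∀ (lam : ℂ) (x : Fin n → ℂ), (A.map Complex.ofReal) *ᵥ x = lam • x →
      0 ≤ lam.re → (H.map Complex.ofReal) *ᵥ x = 0 → x = 0)
    (hineq : ∀ u : Fin n → ℝ,
      u ⬝ᵥ (((Aᵀ - Xh * G) * Xh + Xh * (A - G * Xh) + Xh * G * Xh + H) *ᵥ u) ≤ 0) :
    (∀ (lam : ℂ) (y : Fin n → ℂ),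
      ((A - G * Xh).map Complex.ofReal) *ᵥ y = lam • y → 0 ≤ lam.re →
        (H.map Complex.ofReal) *ᵥ y = 0 ∧ ((G * Xh).map Complex.ofReal) *ᵥ y = 0 ∧
          (A.map Complex.ofReal) *ᵥ y = lam • y) ∧
    (∀ μ ∈ spectrum ℂ ((A - G * Xh).map Complex.ofReal), μ.re < 0) := by
  have hFt : Aᵀ - Xh * G = (A - G * Xh)ᴴ := by
    rw [conjTranspose_sub, conjTranspose_mul, hG.1.eq, hXh.1.eq,
      conjTranspose_eq_transpose_of_trivial]
  have hric : (-((A - G * Xh)ᴴ * Xh + Xh * (A - G * Xh) + Xh * G * Xh + H)).PosSemidef :=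
    .of_dotProduct_mulVec_nonneg (isHermitian_riccati hXh.1 hG.1 hH.1).neg fun u => by
      rw [neg_mulVec, dotProduct_neg, star_trivial, ← hFt]
      exact neg_nonneg.mpr (hineq u)
  replace hric := hric.map_ofReal
  simp only [Matrix.map_neg _ Complex.ofReal_neg, Matrix.map_add _ Complex.ofReal_add,
    Matrix.map_sub _ Complex.ofReal_sub, map_ofReal_mul, map_ofReal_conjTranspose] at hric ⊢
  have eigen := mulVec_eq_smul_of_riccati_nonpos hXh.map_ofReal hG.map_ofReal hH.map_ofReal hric
  refine ⟨fun _ _ hy hre => eigen hy hre, fun μ hμ => ?_⟩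
  by_contra! hre
  obtain ⟨v, hv0, hv⟩ := exists_mulVec_eq_smul_of_mem_spectrum hμ
  obtain ⟨hHv, -, hAv⟩ := eigen hv hre
  exact hv0 (hdet μ v hAv hre hHv)
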